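/- Let N ≥ 2 and define G : ℝ^N → ℝ^{N-1} by G_i(q) = e^{q_i − q_{i+1}} for i = 1,…,N−1. Let w₂ be the constant skew-symmetric N×N matrix with (w₂)_{kl} = 1 for k < l, and let v₂ be the quadratic Volterra structure matrix on ℝ^{N-1} with (v₂)_{ij}(a) = a_i a_j (δ_{j,i+1} − δ_{i,j+1}). Then G is a Poisson map from w₂ to v₂: for all i, j ∈ {1,…,N−1} and all q ∈ ℝ^N, Σ_{k,l=1}^{N} (w₂)_{kl} · ∂G_i/∂q_k (q) · ∂G_j/∂q_l (q) = (v₂)_{ij}(G(q)). -/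

import Mathlib

open Real

/-- Partial derivative `∂f/∂q_k` at `q`. -/
noncomputable def pd {n : ℕ} (f : (Fin n → ℝ) → ℝ) (x : Fin n → ℝ) (l : Fin n) : ℝ :=
  fderiv ℝ f x (Pi.single l 1)

/-- The constant skew-symmetric matrix `w₂` with `(w₂)_{kl} = 1` for `k < l`. -/
def w2 (N : ℕ) : Matrix (Fin N) (Fin N) ℝ :=
  fun i j => if i.val < j.val then 1 else if j.val < i.val then -1 else 0

/-- The quadratic Volterra structure matrix on `ℝ^n`:
`(v₂)_{ij}(a) = a_i a_j (δ_{j,i+1} − δ_{i,j+1})`. -/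
def v2 (n : ℕ) (a : Fin n → ℝ) : Matrix (Fin n) (Fin n) ℝ :=
  fun i j => a i * a j *
    ((if j.val = i.val + 1 then 1 else 0) - (if i.val = j.val + 1 then 1 else 0))

/-- The map `G : ℝ^N → ℝ^{N-1}`, `G_i(q) = e^{q_i - q_{i+1}}`. -/
noncomputable def Gmap (N : ℕ) (q : Fin N → ℝ) : Fin (N-1) → ℝ :=
  fun i => Real.exp (q ⟨i.val, by have := i.isLt; omega⟩ -
    q ⟨i.val + 1, by have := i.isLt; omega⟩)

/-
Each `G_i` is `exp` of the linear form `q_i - q_{i+1}`, so its gradient is `G_i (e_i - e_{i+1})`.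
The bracket of `G_i` and `G_j` under `w₂` is therefore `G_i G_j` times the second difference
`w_{i,j} - w_{i,j+1} - w_{i+1,j} + w_{i+1,j+1}` of the sign matrix `w₂`, which vanishes unless
the indices `i` and `j` are adjacent, where it is `±1`.
-/

lemma pd_exp_sub {n : ℕ} (q : Fin n → ℝ) (a b k : Fin n) :
    pd (fun y => exp (y a - y b)) q k =
      exp (q a - q b) * ((if k = a then 1 else 0) - (if k = b then 1 else 0)) := by
  have hlin : HasFDerivAt (fun y : Fin n → ℝ => y a - y b)
      (ContinuousLinearMap.proj a - ContinuousLinearMap.proj b : (Fin n → ℝ) →L[ℝ] ℝ) q :=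
    (hasFDerivAt_apply a q).sub (hasFDerivAt_apply b q)
  rw [pd, hlin.exp.fderiv]
  simp [Pi.single_apply, eq_comm]

lemma sum_sum_mul_sub_ite_mul_sub_ite {ι : Type*} [Fintype ι] [DecidableEq ι]
    (W : Matrix ι ι ℝ) (a b c d : ι) :
    ∑ k, ∑ l, W k l * ((if k = a then 1 else 0) - (if k = b then 1 else 0)) *
        ((if l = c then 1 else 0) - (if l = d then 1 else 0))
      = W a c - W a d - W b c + W b d := by
  simp only [mul_sub, mul_ite, mul_one, mul_zero, Finset.sum_sub_distrib,
    Finset.sum_ite_eq', Finset.mem_univ, if_true]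
  ring

lemma w2_second_difference {N i j : ℕ} (hi : i + 1 < N) (hj : j + 1 < N) :
    w2 N ⟨i, by omega⟩ ⟨j, by omega⟩ - w2 N ⟨i, by omega⟩ ⟨j + 1, hj⟩
        - w2 N ⟨i + 1, hi⟩ ⟨j, by omega⟩ + w2 N ⟨i + 1, hi⟩ ⟨j + 1, hj⟩
      = (if j = i + 1 then 1 else 0) - (if i = j + 1 then 1 else 0) := by
  simp only [w2]
  split_ifs <;> first | (exfalso; omega) | norm_num

theorem stmt10_general (N : ℕ) (q : Fin N → ℝ) (i j : Fin (N-1)) :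
    ∑ k : Fin N, ∑ l : Fin N,
        w2 N k l * pd (fun y => Gmap N y i) q k * pd (fun y => Gmap N y j) q l
      = v2 (N-1) (Gmap N q) i j := by
  have hi : i.val + 1 < N := by omega
  have hj : j.val + 1 < N := by omega
  simp only [Gmap, pd_exp_sub]
  calc _ = Gmap N q i * Gmap N q j * ∑ k : Fin N, ∑ l : Fin N, w2 N k l *
            ((if k = ⟨i, by omega⟩ then 1 else 0) - (if k = ⟨i + 1, hi⟩ then 1 else 0)) *
            ((if l = ⟨j, by omega⟩ then 1 else 0) - (if l = ⟨j + 1, hj⟩ then 1 else 0)) := by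
        simp only [Gmap, Finset.mul_sum]
        exact Finset.sum_congr rfl fun _ _ => Finset.sum_congr rfl fun _ _ => by ring
    _ = v2 (N-1) (Gmap N q) i j := by
        rw [sum_sum_mul_sub_ite_mul_sub_ite, w2_second_difference hi hj, v2]

/-- `G` is a Poisson map from `w₂` to the quadratic Volterra bracket `v₂`. -/
theorem stmt10 (N : ℕ) (hN : 2 ≤ N) (q : Fin N → ℝ) (i j : Fin (N-1)) :
    ∑ k : Fin N, ∑ l : Fin N,
        w2 N k l * pd (fun y => Gmap N y i) q k * pd (fun y => Gmap N y j) q l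
      = v2 (N-1) (Gmap N q) i j :=
  stmt10_general N q i j
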